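/- Consider the 1-D Gaussian mixture with equal class probabilities p = 1/2, class means γ₁ ≤ γ₂, and common standard deviation σ > 0. For w = 1, the population hinge loss b ↦ L(h_{1,b}; μ_c) is monotonically decreasing on (−∞, −(γ₁+γ₂)/2) and monotonically increasing on (−(γ₁+γ₂)/2, ∞), so its unique minimizer over b is b = −(γ₁+γ₂)/2. -/

import Mathlib

open MeasureTheory ProbabilityTheory

/-- The balanced 1-D Gaussian mixture: with probability `1/2`, label `-1` and `x ~ N(γ₁, σ²)`;
with probability `1/2`, label `+1` and `x ~ N(γ₂, σ²)`. -/
noncomputable def gaussMixBal (γ₁ γ₂ σ : ℝ) : Measure (ℝ × ℝ) :=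
  ENNReal.ofReal (1 / 2) • ((gaussianReal γ₁ (Real.toNNReal (σ ^ 2))).map (fun x => (x, -1))) +
  ENNReal.ofReal (1 / 2) • ((gaussianReal γ₂ (Real.toNNReal (σ ^ 2))).map (fun x => (x, 1)))

/-- Population hinge loss (λ = 0) of the linear classifier `h_{w,b}` under `μ`. -/
noncomputable def hingeLoss (w b : ℝ) (μ : Measure (ℝ × ℝ)) : ℝ :=
  ∫ z, max 0 (1 - z.2 * (w * z.1 + b)) ∂μ

/-!
With `u = b + (γ₁ + γ₂)/2`, the affine maps `x ↦ x + (1 - (γ₁ + γ₂)/2)` and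
`x ↦ 1 + (γ₁ + γ₂)/2 - x` carry both class-conditional laws onto the same Gaussian `N(a, σ²)`,
`a = 1 + (γ₁ - γ₂)/2`, so the hinge loss equals `½ E[(X + u)⁺ + (X - u)⁺]` with `X ~ N(a, σ²)`.
This is even in `u`, and pointwise `s ↦ (x + s)⁺ + (x - s)⁺` is nondecreasing on `s ≥ 0` and
strictly increasing from `s` to `t` whenever `|x| < t`; since `N(a, σ²)` charges every interval,
the expectation is strictly increasing in `|u|`.
-/

open Set

lemma max_zero_add_add_max_zero_sub_le {x s t : ℝ} (hs : 0 ≤ s) (hst : s ≤ t) :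
    max 0 (x + s) + max 0 (x - s) ≤ max 0 (x + t) + max 0 (x - t) := by
  simp only [max_def]; split_ifs <;> linarith

lemma max_zero_add_add_max_zero_sub_lt {x s t : ℝ} (hs : 0 ≤ s) (hst : s < t) (hx : |x| < t) :
    max 0 (x + s) + max 0 (x - s) < max 0 (x + t) + max 0 (x - t) := by
  rw [abs_lt] at hx
  simp only [max_def]; split_ifs <;> linarith

noncomputable def symmHingeRisk (μ : Measure ℝ) (u : ℝ) : ℝ :=
  ∫ x, (max 0 (x + u) + max 0 (x - u)) ∂μ

section symmHingeRisk

variable {μ : Measure ℝ}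

lemma symmHingeRisk_neg (u : ℝ) : symmHingeRisk μ (-u) = symmHingeRisk μ u := by
  simp only [symmHingeRisk, sub_neg_eq_add, ← sub_eq_add_neg, add_comm]

lemma integrable_max_zero_mul_add [IsFiniteMeasure μ] (hμ : Integrable id μ) (c d : ℝ) :
    Integrable (fun x => max 0 (c * x + d)) μ :=
  (integrable_const 0).sup ((hμ.const_mul c).add (integrable_const d))

lemma integrable_max_zero_add_add_max_zero_sub [IsFiniteMeasure μ] (hμ : Integrable id μ) (u : ℝ) :
    Integrable (fun x => max 0 (x + u) + max 0 (x - u)) μ := by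
  have h_add : Integrable (fun x => max 0 (x + u)) μ := by
    simpa using integrable_max_zero_mul_add hμ 1 u
  have h_sub : Integrable (fun x => max 0 (x - u)) μ := by
    simpa [sub_eq_add_neg] using integrable_max_zero_mul_add hμ 1 (-u)
  exact h_add.add h_sub

theorem symmHingeRisk_strictMonoOn [IsFiniteMeasure μ] (hμ : Integrable id μ) (hvol : volume ≪ μ) :
    StrictMonoOn (symmHingeRisk μ) (Ici 0) := by
  intro s hs t _ hst
  have hint := integrable_max_zero_add_add_max_zero_sub hμ
  rw [← sub_pos, symmHingeRisk, symmHingeRisk, ← integral_sub (hint t) (hint s),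
    integral_pos_iff_support_of_nonneg
      (fun x => sub_nonneg.2 (max_zero_add_add_max_zero_sub_le hs hst.le)) ((hint t).sub (hint s))]
  have ht : 0 < t := (mem_Ici.1 hs).trans_lt hst
  have hIoo : 0 < μ (Ioo (-t) t) := hvol.pos_mono (by simpa using neg_lt_self ht)
  refine hIoo.trans_le (measure_mono fun x hx => ?_)
  exact (sub_pos.2 (max_zero_add_add_max_zero_sub_lt hs hst (abs_lt.2 hx))).ne'

theorem symmHingeRisk_strictAntiOn [IsFiniteMeasure μ] (hμ : Integrable id μ) (hvol : volume ≪ μ) :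
    StrictAntiOn (symmHingeRisk μ) (Iic 0) := fun s hs t ht hst => by
  rw [← symmHingeRisk_neg s, ← symmHingeRisk_neg t]
  exact symmHingeRisk_strictMonoOn hμ hvol (mem_Ici.2 (neg_nonneg.2 ht))
    (mem_Ici.2 (neg_nonneg.2 hs)) (neg_lt_neg hst)

end symmHingeRisk

lemma integral_gaussMixBal (γ₁ γ₂ σ : ℝ) {f : ℝ × ℝ → ℝ}
    (h₁ : Integrable (fun x => f (x, -1)) (gaussianReal γ₁ (σ ^ 2).toNNReal))
    (h₂ : Integrable (fun x => f (x, 1)) (gaussianReal γ₂ (σ ^ 2).toNNReal)) :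
    ∫ z, f z ∂gaussMixBal γ₁ γ₂ σ = (∫ x, f (x, -1) ∂gaussianReal γ₁ (σ ^ 2).toNNReal
      + ∫ x, f (x, 1) ∂gaussianReal γ₂ (σ ^ 2).toNNReal) / 2 := by
  have e := measurableEmbedding_prod_mk_right (α := ℝ) (β := ℝ)
  rw [gaussMixBal, integral_add_measure
      (((e (-1)).integrable_map_iff.2 h₁).smul_measure ENNReal.ofReal_ne_top)
      (((e 1).integrable_map_iff.2 h₂).smul_measure ENNReal.ofReal_ne_top),
    integral_smul_measure, integral_smul_measure, (e _).integral_map, (e _).integral_map,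
    ENNReal.toReal_ofReal (by norm_num)]
  simp only [smul_eq_mul]
  ring

theorem hingeLoss_one_gaussMixBal (γ₁ γ₂ σ b : ℝ) :
    hingeLoss 1 b (gaussMixBal γ₁ γ₂ σ) =
      symmHingeRisk (gaussianReal (1 + (γ₁ - γ₂) / 2) (σ ^ 2).toNNReal) (b + (γ₁ + γ₂) / 2)
        / 2 := by
  have hid (m : ℝ) : Integrable id (gaussianReal m (σ ^ 2).toNNReal) :=
    (memLp_id_gaussianReal 1).integrable le_rfl
  have h₁ : ∫ x, max 0 (1 - -1 * (1 * x + b)) ∂gaussianReal γ₁ (σ ^ 2).toNNReal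
      = ∫ x, max 0 (x + (b + (γ₁ + γ₂) / 2))
          ∂gaussianReal (1 + (γ₁ - γ₂) / 2) (σ ^ 2).toNNReal := by
    rw [show 1 + (γ₁ - γ₂) / 2 = γ₁ + (1 - (γ₁ + γ₂) / 2) by ring, ← gaussianReal_map_add_const,
      (measurableEmbedding_addRight _).integral_map]
    congr with x
    ring_nf
  have h₂ : ∫ x, max 0 (1 - 1 * (1 * x + b)) ∂gaussianReal γ₂ (σ ^ 2).toNNReal
      = ∫ x, max 0 (x - (b + (γ₁ + γ₂) / 2))
          ∂gaussianReal (1 + (γ₁ - γ₂) / 2) (σ ^ 2).toNNReal := by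
    rw [show 1 + (γ₁ - γ₂) / 2 = (1 + (γ₁ + γ₂) / 2) - γ₂ by ring, ← gaussianReal_map_const_sub,
      (measurableEmbedding_subLeft _).integral_map]
    congr with x
    ring_nf
  rw [hingeLoss, integral_gaussMixBal γ₁ γ₂ σ, h₁, h₂, symmHingeRisk, integral_add]
  · simpa using integrable_max_zero_mul_add (hid _) 1 (b + (γ₁ + γ₂) / 2)
  · simpa [sub_eq_add_neg] using integrable_max_zero_mul_add (hid _) 1 (-(b + (γ₁ + γ₂) / 2))
  · convert integrable_max_zero_mul_add (hid γ₁) 1 (1 + b) using 3; ring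
  · convert integrable_max_zero_mul_add (hid γ₂) (-1) (1 - b) using 3; ring

theorem stmt2_general (γ₁ γ₂ σ : ℝ) (hσ : 0 < σ) :
    StrictAntiOn (fun b => hingeLoss 1 b (gaussMixBal γ₁ γ₂ σ)) (Set.Iic (-(γ₁ + γ₂) / 2)) ∧
    StrictMonoOn (fun b => hingeLoss 1 b (gaussMixBal γ₁ γ₂ σ)) (Set.Ici (-(γ₁ + γ₂) / 2)) ∧
    ∀ b : ℝ, b ≠ -(γ₁ + γ₂) / 2 →
      hingeLoss 1 (-(γ₁ + γ₂) / 2) (gaussMixBal γ₁ γ₂ σ) < hingeLoss 1 b (gaussMixBal γ₁ γ₂ σ) := by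
  set μ := gaussianReal (1 + (γ₁ - γ₂) / 2) (σ ^ 2).toNNReal
  have hμ : Integrable id μ := (memLp_id_gaussianReal 1).integrable le_rfl
  have hvol : volume ≪ μ := gaussianReal_absolutelyContinuous' _ (by simp [hσ.ne'])
  have hL (b : ℝ) :
      hingeLoss 1 b (gaussMixBal γ₁ γ₂ σ) = symmHingeRisk μ (b - -(γ₁ + γ₂) / 2) / 2 := by
    rw [hingeLoss_one_gaussMixBal]; congr 2; ring
  have hanti :
      StrictAntiOn (fun b => hingeLoss 1 b (gaussMixBal γ₁ γ₂ σ)) (Iic (-(γ₁ + γ₂) / 2)) :=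
    fun s hs t ht hst => by
      simp only [hL]
      linarith [symmHingeRisk_strictAntiOn hμ hvol (mem_Iic.2 (sub_nonpos.2 hs))
        (mem_Iic.2 (sub_nonpos.2 ht)) (sub_lt_sub_right hst _)]
  have hmono :
      StrictMonoOn (fun b => hingeLoss 1 b (gaussMixBal γ₁ γ₂ σ)) (Ici (-(γ₁ + γ₂) / 2)) :=
    fun s hs t ht hst => by
      simp only [hL]
      linarith [symmHingeRisk_strictMonoOn hμ hvol (mem_Ici.2 (sub_nonneg.2 hs))
        (mem_Ici.2 (sub_nonneg.2 ht)) (sub_lt_sub_right hst _)]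
  refine ⟨hanti, hmono, fun b hb => ?_⟩
  rcases hb.lt_or_gt with h | h
  · exact hanti h.le self_mem_Iic h
  · exact hmono self_mem_Ici h.le h

theorem stmt2 (γ₁ γ₂ σ : ℝ) (hγ : γ₁ ≤ γ₂) (hσ : 0 < σ) :
    StrictAntiOn (fun b => hingeLoss 1 b (gaussMixBal γ₁ γ₂ σ)) (Set.Iic (-(γ₁ + γ₂) / 2)) ∧
    StrictMonoOn (fun b => hingeLoss 1 b (gaussMixBal γ₁ γ₂ σ)) (Set.Ici (-(γ₁ + γ₂) / 2)) ∧
    ∀ b : ℝ, b ≠ -(γ₁ + γ₂) / 2 →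
      hingeLoss 1 (-(γ₁ + γ₂) / 2) (gaussMixBal γ₁ γ₂ σ) < hingeLoss 1 b (gaussMixBal γ₁ γ₂ σ) :=
  stmt2_general γ₁ γ₂ σ hσ
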